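/- arXiv:2208.10355 — 2 statements merged into one kernel-verified Lean document; each statement's English description precedes it below -/
import Mathlib

section
/- Let α ∈ ℂ with Re α > 0 and let φ be a Schwartz function on ℝⁿ. Then for each choice of sign ±, the function y ↦ (y_n − |y'|²)_±^{α−1} φ(y) is Lebesgue integrable on ℝⁿ; in particular, p_{α±}(y) = (1/Γ(α)) (y_n − |y'|²)_±^{α−1} defines a regular tempered distribution on ℝⁿ. -/
/-!
With `s = yₙ - |y'|²` and `a = Re α`, the kernel is bounded by `|s| ^ (a - 1)`, which is at most
`1_{|s| ≤ 1} |s| ^ (a - 1) + |s| ^ m` for an integer `m ≥ a - 1`. The first term is integrable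
in `s` because `a - 1 > -1`; as `φ y` decays like `(1 + |y'|) ^ (-k)` with `k > n - 1`, the shear
`(y', yₙ) ↦ (y', s)`, which preserves Lebesgue measure, turns its product with `φ` into a product of
integrable functions of `y'` and of `s`. The second term is at most `(1 + |y|) ^ (2m)`, a polynomial
weight that the Schwartz function `φ` absorbs.
-/

open MeasureTheory Complex

noncomputable section

/-- ℝⁿ realized as ℝ^{n-1} × ℝ, points written x = (x', xₙ). -/
abbrev Rn (n : ℕ) : Type := EuclideanSpace ℝ (Fin (n - 1)) × ℝ

/-- (t)₊^λ = exp(λ log t) for t > 0 (σ = true), (t)₋^λ = exp(λ log(−t)) for t < 0 (σ = false). -/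
def ppow (σ : Bool) (t : ℝ) (l : ℂ) : ℂ :=
  if σ then (if 0 < t then Complex.exp (l * Real.log t) else 0)
  else (if t < 0 then Complex.exp (l * Real.log (-t)) else 0)

/-- The parabolic fractional integral P_±^α f. -/
def parP (n : ℕ) (σ : Bool) (α : ℂ) (f : Rn n → ℂ) (x : Rn n) : ℂ :=
  (1 / Complex.Gamma α) * ∫ y : Rn n, ppow σ (y.2 - ‖y.1‖ ^ 2) (α - 1) * f (x - y)

open Set

theorem MeasureTheory.Integrable.mul_comp_sub_prod {α G L : Type*} [MeasurableSpace α]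
    [MeasurableSpace G] [AddGroup G] [MeasurableAdd G] [MeasurableSub₂ G] [NormedRing L]
    {μ : Measure α} {ν : Measure G} [SFinite μ] [SFinite ν] [ν.IsAddRightInvariant]
    {u : α → L} {v : G → L} {g : α → G} (hu : Integrable u μ) (hv : Integrable v ν)
    (hg : Measurable g) :
    Integrable (fun y : α × G => u y.1 * v (y.2 - g y.1)) (μ.prod ν) := by
  have hshear : MeasurePreserving (fun y : α × G => (y.1, y.2 - g y.1)) (μ.prod ν) (μ.prod ν) :=
    (MeasurePreserving.id μ).skew_product (g := fun x t => t - g x) (by fun_prop)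
      (ae_of_all _ fun x => (measurePreserving_sub_right ν (g x)).map_eq)
  have hprod := hu.mul_prod hv
  exact (hshear.integrable_comp hprod.aestronglyMeasurable).mpr hprod

theorem locallyIntegrable_abs_rpow {r : ℝ} (hr : -1 < r) :
    LocallyIntegrable fun s : ℝ => |s| ^ r :=
  locallyIntegrable_of_norm_le_rpow (C := 1) (α := -r) (by simp)
    (by simp only [Module.finrank_self, Nat.cast_one]; linarith)
    (ae_of_all _ fun s => by simp [abs_of_nonneg, Real.rpow_nonneg])
    (continuous_abs.measurable.pow_const r).aestronglyMeasurable

theorem abs_rpow_le_indicator_add_pow {r : ℝ} {m : ℕ} (hrm : r ≤ m) (s : ℝ) :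
    |s| ^ r ≤ (Icc (-1) 1).indicator (fun s => |s| ^ r) s + |s| ^ m := by
  rcases le_or_gt |s| 1 with hs | hs
  · rw [indicator_of_mem (mem_Icc.mpr (abs_le.mp hs))]
    exact le_add_of_nonneg_right (by positivity)
  · rw [← Real.rpow_natCast]
    exact le_add_of_nonneg_of_le (indicator_nonneg (fun _ _ => by positivity) s)
      (Real.rpow_le_rpow_of_exponent_le hs.le hrm)

theorem abs_snd_sub_norm_fst_sq_le {E : Type*} [SeminormedAddCommGroup E] (y : E × ℝ) :
    |y.2 - ‖y.1‖ ^ 2| ≤ (1 + ‖y‖) ^ 2 := by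
  have h1 : ‖y.1‖ ≤ ‖y‖ := norm_fst_le y
  have h2 : |y.2| ≤ ‖y‖ := norm_snd_le y
  obtain ⟨h2l, h2r⟩ := abs_le.mp h2
  have h3 : ‖y.1‖ ^ 2 ≤ ‖y‖ ^ 2 := pow_le_pow_left₀ (norm_nonneg _) h1 2
  rw [abs_le]
  constructor <;> nlinarith [norm_nonneg y]

namespace SchwartzMap
variable {D V : Type*} [NormedAddCommGroup D] [NormedSpace ℝ D] [MeasurableSpace D] [BorelSpace D]
  [SecondCountableTopology D] [NormedAddCommGroup V] [NormedSpace ℝ V]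

theorem integrable_one_add_norm_pow_mul (μ : Measure D) [μ.HasTemperateGrowth] (f : 𝓢(D, V))
    (k : ℕ) : Integrable (fun x => (1 + ‖x‖) ^ k * ‖f x‖) μ := by
  have hsum : Integrable (fun x => ∑ i ∈ Finset.range (k + 1),
      (k.choose i : ℝ) * (‖x‖ ^ i * ‖f x‖)) μ :=
    integrable_finsetSum _ fun i _ => (f.integrable_pow_mul μ i).const_mul _
  refine hsum.congr (ae_of_all _ fun x => ?_)
  beta_reduce
  rw [add_comm 1 ‖x‖, add_pow, Finset.sum_mul]
  exact Finset.sum_congr rfl fun i _ => by ring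

theorem exists_norm_le_one_add_norm_fst_rpow_neg {E F : Type*} [NormedAddCommGroup E]
    [NormedSpace ℝ E] [NormedAddCommGroup F] [NormedSpace ℝ F] (f : 𝓢(E × F, V)) (k : ℕ) :
    ∃ C, ∀ y, ‖f y‖ ≤ C * (1 + ‖y.1‖) ^ (-(k : ℝ)) := by
  refine ⟨2 ^ k * (Finset.Iic (k, 0)).sup (fun m => SchwartzMap.seminorm ℝ m.1 m.2) f,
    fun y => ?_⟩
  have hdecay := one_add_le_sup_seminorm_apply (𝕜 := ℝ) (m := (k, 0)) le_rfl le_rfl f y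
  rw [norm_iteratedFDeriv_zero] at hdecay
  rw [Real.rpow_neg (by positivity), Real.rpow_natCast, ← div_eq_mul_inv,
    le_div_iff₀ (by positivity), mul_comm]
  calc (1 + ‖y.1‖) ^ k * ‖f y‖ ≤ (1 + ‖y‖) ^ k * ‖f y‖ := by
        gcongr; exact norm_fst_le y
    _ ≤ _ := hdecay

end SchwartzMap

theorem norm_ppow_le (σ : Bool) (t : ℝ) (l : ℂ) : ‖ppow σ t l‖ ≤ |t| ^ l.re := by
  have hexp : ∀ s : ℝ, 0 < s → ‖Complex.exp (l * Real.log s)‖ = s ^ l.re := fun s hs => by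
    rw [Complex.norm_exp, Real.rpow_def_of_pos hs]
    simp [mul_comm]
  cases σ <;> simp only [ppow, if_true, Bool.false_eq_true, if_false] <;> split_ifs with ht
  · rw [hexp (-t) (neg_pos.mpr ht), abs_of_neg ht]
  · simpa using Real.rpow_nonneg (abs_nonneg t) l.re
  · rw [hexp t ht, abs_of_pos ht]
  · simpa using Real.rpow_nonneg (abs_nonneg t) l.re

theorem measurable_ppow (σ : Bool) (l : ℂ) : Measurable fun t : ℝ => ppow σ t l := by
  unfold ppow
  cases σ <;> simp only [if_true, Bool.false_eq_true, if_false]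
  · exact Measurable.ite measurableSet_Iio (by fun_prop) measurable_const
  · exact Measurable.ite measurableSet_Ioi (by fun_prop) measurable_const

theorem norm_ppow_le_indicator_add_pow {E : Type*} [SeminormedAddCommGroup E] (σ : Bool)
    {l : ℂ} {m : ℕ} (hm : l.re ≤ m) (y : E × ℝ) :
    ‖ppow σ (y.2 - ‖y.1‖ ^ 2) l‖ ≤
      (Icc (-1) 1).indicator (fun s => |s| ^ l.re) (y.2 - ‖y.1‖ ^ 2) + (1 + ‖y‖) ^ (2 * m) := by
  set s := y.2 - ‖y.1‖ ^ 2
  calc ‖ppow σ s l‖ ≤ |s| ^ l.re := norm_ppow_le σ s l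
    _ ≤ (Icc (-1) 1).indicator (fun s => |s| ^ l.re) s + |s| ^ m :=
        abs_rpow_le_indicator_add_pow hm s
    _ ≤ _ := by
        rw [pow_mul]
        gcongr
        exact abs_snd_sub_norm_fst_sq_le y

theorem kernel_mul_schwartz_integrable_general (n : ℕ) (σ : Bool)
    (α : ℂ) (hα : 0 < α.re) (φ : SchwartzMap (Rn n) ℂ) :
    Integrable (fun y : Rn n => ppow σ (y.2 - ‖y.1‖ ^ 2) (α - 1) * φ y) := by
  set v := (Icc (-1) 1).indicator fun s : ℝ => |s| ^ (α - 1).re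
  set m := ⌈α.re⌉₊
  set k := Module.finrank ℝ (EuclideanSpace ℝ (Fin (n - 1))) + 1
  obtain ⟨C, hC⟩ := φ.exists_norm_le_one_add_norm_fst_rpow_neg k
  have hv : Integrable v :=
    ((locallyIntegrable_abs_rpow (by simpa using hα)).integrableOn_isCompact
      isCompact_Icc).integrable_indicator measurableSet_Icc
  have hnear :
      Integrable fun y : Rn n => C * (1 + ‖y.1‖) ^ (-(k : ℝ)) * v (y.2 - ‖y.1‖ ^ 2) := by
    rw [Measure.volume_eq_prod]
    exact ((integrable_one_add_norm (by simp [k])).const_mul C).mul_comp_sub_prod hv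
      (by fun_prop : Measurable fun x : EuclideanSpace ℝ (Fin (n - 1)) => ‖x‖ ^ 2)
  -- `volume` on `Rn n` is `volume.prod volume` only propositionally, so the instance is not found
  have : (volume : Measure (Rn n)).IsAddHaarMeasure := by
    rw [Measure.volume_eq_prod]; infer_instance
  have hfar := φ.integrable_one_add_norm_pow_mul volume (2 * m)
  have hmeas : Measurable fun y : Rn n => ppow σ (y.2 - ‖y.1‖ ^ 2) (α - 1) :=
    (measurable_ppow σ _).comp (by fun_prop : Measurable fun y : Rn n => y.2 - ‖y.1‖ ^ 2)
  refine (hnear.add hfar).mono' (hmeas.aestronglyMeasurable.mul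
    φ.continuous.aestronglyMeasurable) (ae_of_all _ fun y => ?_)
  have hvs : 0 ≤ v (y.2 - ‖y.1‖ ^ 2) :=
    indicator_nonneg (fun t _ => Real.rpow_nonneg (abs_nonneg t) _) _
  rw [norm_mul, Pi.add_apply]
  calc _ ≤ (v (y.2 - ‖y.1‖ ^ 2) + (1 + ‖y‖) ^ (2 * m)) * ‖φ y‖ := by
        gcongr
        refine norm_ppow_le_indicator_add_pow σ ?_ y
        simp only [Complex.sub_re, Complex.one_re]
        linarith [Nat.le_ceil α.re]
    _ ≤ _ := by
        rw [add_mul, mul_comm (v _)]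
        gcongr
        exact hC y

/-- For Re α > 0 and φ Schwartz, the function y ↦ (yₙ − |y'|²)_±^{α−1} φ(y) is Lebesgue
integrable on ℝⁿ; hence p_{α±} defines a regular tempered distribution. -/
theorem kernel_mul_schwartz_integrable (n : ℕ) (hn : 2 ≤ n) (σ : Bool)
    (α : ℂ) (hα : 0 < α.re) (φ : SchwartzMap (Rn n) ℂ) :
    Integrable (fun y : Rn n => ppow σ (y.2 - ‖y.1‖ ^ 2) (α - 1) * φ y) :=
  kernel_mul_schwartz_integrable_general n σ α hα φ
end
end

section
/- Let α ∈ ℂ with Re α > 0, let ε > 0, and let x ∈ ℝⁿ. Then the function y ↦ (y_n − |y'|²)_−^{α−1} e^{ε y_n − 2ε|y'|²} e^{i x·y} is integrable on ℝⁿ and (1/Γ(α)) ∫_{ℝⁿ} (y_n − |y'|²)_−^{α−1} e^{ε y_n − 2ε|y'|²} e^{i x·y} dy = π^{(n−1)/2} (ε + i x_n)^{−α} (ε − i x_n)^{(1−n)/2} exp(−|x'|²/(4(ε − i x_n))), where for z ∈ ℂ with Re z > 0 and λ ∈ ℂ the power z^λ = exp(λ(log|z| + i·arg z)) is taken with −π/2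 < arg z < π/2. -/
open MeasureTheory Complex

noncomputable section

/-!
The shear `(y', yₙ) ↦ (y', yₙ + |y'|²)` preserves volume and flattens the paraboloid
`yₙ = |y'|²`; after it the integrand splits as a Gaussian `e^{-(ε - i xₙ)|y'|² + i x'·y'}` in `y'`
times `(s)₋^{α-1} e^{(ε + i xₙ) s}` in `s = yₙ - |y'|²`. The first factor is the Fourier transform
of a complex Gaussian. The second is, after `s ↦ -s`, the Laplace transform
`∫₀^∞ t^{α-1} e^{-βt} dt = Γ(α) β^{-α}` at `β = ε + i xₙ`, which holds for complex `β` with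
`Re β > 0` by analytic continuation from `β > 0`.
-/

open Set Filter Topology

section LaplaceTransform

variable {a : ℂ}

lemma norm_cpow_mul_cexp_neg_mul {t : ℝ} (ht : 0 < t) (b : ℂ) :
    ‖(t : ℂ) ^ (a - 1) * cexp (-(b * t))‖ = t ^ (a.re - 1) * Real.exp (-(b.re * t)) := by
  rw [norm_mul, norm_cpow_eq_rpow_re_of_pos ht, norm_exp]
  simp

lemma continuousOn_cpow_mul_cexp_neg_mul (a b : ℂ) :
    ContinuousOn (fun t : ℝ => (t : ℂ) ^ (a - 1) * cexp (-(b * t))) (Ioi 0) :=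
  ContinuousOn.mul
    (fun t ht => ((continuousAt_cpow_const (ofReal_mem_slitPlane.2 ht)).comp
      continuous_ofReal.continuousAt).continuousWithinAt)
    (by fun_prop)

lemma integrableOn_cpow_mul_cexp_neg_mul_Ioi (ha : 0 < a.re) {b : ℂ} (hb : 0 < b.re) :
    IntegrableOn (fun t : ℝ => (t : ℂ) ^ (a - 1) * cexp (-(b * t))) (Ioi 0) := by
  have hdom : IntegrableOn (fun t : ℝ => t ^ (a.re - 1) * Real.exp (-(b.re * t))) (Ioi 0) := by
    simpa [Real.rpow_one, neg_mul] using
      integrableOn_rpow_mul_exp_neg_mul_rpow (s := a.re - 1) (p := 1) (by linarith) one_pos hb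
  refine hdom.mono' ((continuousOn_cpow_mul_cexp_neg_mul a b).aestronglyMeasurable
    measurableSet_Ioi) ?_
  filter_upwards [self_mem_ae_restrict measurableSet_Ioi] with t ht
  exact (norm_cpow_mul_cexp_neg_mul ht b).le

lemma differentiableOn_integral_cpow_mul_cexp_neg_mul_Ioi (ha : 0 < a.re) :
    DifferentiableOn ℂ (fun b : ℂ => ∫ t : ℝ in Ioi 0, (t : ℂ) ^ (a - 1) * cexp (-(b * t)))
      {b | 0 < b.re} := by
  intro c (hc : 0 < c.re)
  have hδ : 0 < c.re / 2 := half_pos hc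
  have hre : ∀ x ∈ Metric.ball c (c.re / 2), c.re / 2 ≤ x.re := fun x hx => by
    have := (abs_re_le_norm (x - c)).trans (mem_ball_iff_norm.1 hx).le
    rw [sub_re, abs_le] at this
    linarith
  have hdom : IntegrableOn (fun t : ℝ => t ^ a.re * Real.exp (-(c.re / 2 * t))) (Ioi 0) := by
    simpa [Real.rpow_one, neg_mul] using
      integrableOn_rpow_mul_exp_neg_mul_rpow (s := a.re) (p := 1) (by linarith) one_pos hδ
  refine (hasDerivAt_integral_of_dominated_loc_of_deriv_le (Metric.ball_mem_nhds c hδ)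
    (F' := fun x (t : ℝ) => (t : ℂ) ^ (a - 1) * cexp (-(x * t)) * -(t : ℂ))
    (Eventually.of_forall fun x => (continuousOn_cpow_mul_cexp_neg_mul a x).aestronglyMeasurable
      measurableSet_Ioi)
    (integrableOn_cpow_mul_cexp_neg_mul_Ioi ha hc)
    (((continuousOn_cpow_mul_cexp_neg_mul a c).mul (by fun_prop)).aestronglyMeasurable
      measurableSet_Ioi) ?_ hdom ?_).2.differentiableAt.differentiableWithinAt
  · filter_upwards [self_mem_ae_restrict measurableSet_Ioi] with t (ht : 0 < t) x hx
    rw [norm_mul, norm_cpow_mul_cexp_neg_mul ht, norm_neg, norm_real, Real.norm_of_nonneg ht.le,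
      mul_right_comm, ← Real.rpow_add_one ht.ne', sub_add_cancel]
    gcongr
    nlinarith [hre x hx]
  · filter_upwards with t x _
    simpa [mul_assoc] using ((hasDerivAt_mul_const (t : ℂ)).neg.cexp).const_mul ((t : ℂ) ^ (a - 1))

theorem integral_cpow_mul_cexp_neg_mul_Ioi_of_re_pos (ha : 0 < a.re) {b : ℂ} (hb : 0 < b.re) :
    ∫ t : ℝ in Ioi 0, (t : ℂ) ^ (a - 1) * cexp (-(b * t)) = Gamma a * b ^ (-a) := by
  have hU : IsOpen {z : ℂ | 0 < z.re} := isOpen_lt continuous_const continuous_re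
  have hG : DifferentiableOn ℂ (fun z : ℂ => Gamma a * z ^ (-a)) {z | 0 < z.re} := fun z hz =>
    ((differentiableAt_id.cpow_const (Or.inl hz)).const_mul _).differentiableWithinAt
  refine ((differentiableOn_integral_cpow_mul_cexp_neg_mul_Ioi ha).analyticOnNhd hU
    |>.eqOn_of_preconnected_of_frequently_eq (hG.analyticOnNhd hU)
      (convex_halfSpace_re_gt 0).isPreconnected (show (0 : ℝ) < (1 : ℂ).re by simp) ?_) hb
  have hreal : Tendsto ((↑) : ℝ → ℂ) (𝓝[>] 1) (𝓝[≠] 1) :=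
    tendsto_nhdsWithin_of_tendsto_nhds_of_eventually_within _
      ((continuous_ofReal.tendsto' 1 1 ofReal_one).mono_left nhdsWithin_le_nhds)
      (eventually_nhdsWithin_of_forall fun t ht => by simpa using (mem_Ioi.1 ht).ne')
  refine hreal.frequently (Eventually.frequently (eventually_nhdsWithin_of_forall fun r hr1 => ?_))
  have hr : 0 < r := one_pos.trans hr1
  rw [integral_cpow_mul_exp_neg_mul_Ioi ha hr, one_div,
    inv_cpow _ _ (slitPlane_arg_ne_pi (ofReal_mem_slitPlane.2 hr)), ← cpow_neg, mul_comm]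

end LaplaceTransform

section NegativePart

variable {α : ℂ}

lemma ppow_false_of_nonneg {s : ℝ} (hs : 0 ≤ s) (l : ℂ) : ppow false s l = 0 := by
  simp [ppow, hs.not_gt]

lemma ppow_false_neg {u : ℝ} (hu : 0 < u) (l : ℂ) : ppow false (-u) l = (u : ℂ) ^ l := by
  rw [ppow, if_neg Bool.false_ne_true, if_pos (neg_neg_of_pos hu), neg_neg,
    cpow_def_of_ne_zero (ofReal_ne_zero.2 hu.ne'), ofReal_log hu.le, mul_comm]

lemma ppow_false_neg_mul_cexp (l β : ℂ) :
    (fun s : ℝ => ppow false (-s) l * cexp (β * ↑(-s))) =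
      (Ioi 0).indicator (fun t : ℝ => (t : ℂ) ^ l * cexp (-(β * t))) := by
  ext s
  by_cases hs : 0 < s
  · simp [indicator_of_mem (mem_Ioi.2 hs), ppow_false_neg hs]
  · simp [indicator_of_notMem (notMem_Ioi.2 (not_lt.1 hs)),
      ppow_false_of_nonneg (neg_nonneg.2 (not_lt.1 hs))]

lemma integrable_ppow_false_mul_cexp (hα : 0 < α.re) {β : ℂ} (hβ : 0 < β.re) :
    Integrable (fun s : ℝ => ppow false s (α - 1) * cexp (β * s)) := by
  have h := ((integrable_indicator_iff measurableSet_Ioi).2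
    (integrableOn_cpow_mul_cexp_neg_mul_Ioi hα hβ)).comp_neg
  rw [← ppow_false_neg_mul_cexp] at h
  simpa using h

lemma integral_ppow_false_mul_cexp (hα : 0 < α.re) {β : ℂ} (hβ : 0 < β.re) :
    ∫ s : ℝ, ppow false s (α - 1) * cexp (β * s) = Gamma α * β ^ (-α) := by
  rw [← integral_neg_eq_self, ppow_false_neg_mul_cexp, integral_indicator measurableSet_Ioi,
    integral_cpow_mul_cexp_neg_mul_Ioi_of_re_pos hα hβ]

end NegativePart

def shearEquiv {E : Type*} [MeasurableSpace E] {f : E → ℝ} (hf : Measurable f) :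
    E × ℝ ≃ᵐ E × ℝ where
  toFun p := (p.1, p.2 + f p.1)
  invFun p := (p.1, p.2 - f p.1)
  left_inv p := by simp
  right_inv p := by simp
  measurable_toFun := measurable_fst.prodMk (measurable_snd.add (hf.comp measurable_fst))
  measurable_invFun := measurable_fst.prodMk (measurable_snd.sub (hf.comp measurable_fst))

lemma measurePreserving_shearEquiv {E : Type*} [MeasurableSpace E] (μ : Measure E) [SFinite μ]
    {f : E → ℝ} (hf : Measurable f) :
    MeasurePreserving (shearEquiv hf) (μ.prod volume) (μ.prod volume) :=
  (MeasurePreserving.id μ).skew_product (shearEquiv hf).measurable.snd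
    (ae_of_all _ fun v => (measurePreserving_add_right volume (f v)).map_eq)

lemma ofReal_div_cpow {r : ℝ} (hr : 0 < r) {z : ℂ} (hz : z ∈ slitPlane) (w : ℂ) :
    ((r : ℂ) / z) ^ w = (r : ℂ) ^ w * z ^ (-w) := by
  have hz0 := slitPlane_ne_zero hz
  have hr0 : (r : ℂ) ≠ 0 := ofReal_ne_zero.2 hr.ne'
  rw [div_eq_mul_inv, cpow_def_of_ne_zero (mul_ne_zero hr0 (inv_ne_zero hz0)),
    log_ofReal_mul hr (inv_ne_zero hz0), add_mul, exp_add, cpow_neg,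
    ← inv_cpow _ _ (slitPlane_arg_ne_pi hz), cpow_def_of_ne_zero (inv_ne_zero hz0),
    cpow_def_of_ne_zero hr0, ofReal_log hr.le]

section DampedKernel

variable {V : Type*} [NormedAddCommGroup V] [InnerProductSpace ℝ V]

def dampedMinusKernel (α : ℂ) (ε : ℝ) (w : V) (ξ : ℝ) (y : V × ℝ) : ℂ :=
  ppow false (y.2 - ‖y.1‖ ^ 2) (α - 1) *
    cexp ((ε : ℂ) * y.2 - 2 * (ε : ℂ) * ((‖y.1‖ ^ 2 : ℝ) : ℂ)) *
    cexp (I * (((inner ℝ w y.1 : ℝ) : ℂ) + (ξ : ℂ) * y.2))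

variable [MeasurableSpace V] [BorelSpace V]

lemma dampedMinusKernel_comp_shearEquiv (α : ℂ) (ε : ℝ) (w : V) (ξ : ℝ) :
    dampedMinusKernel α ε w ξ ∘ shearEquiv (f := fun v : V => ‖v‖ ^ 2) (by fun_prop) =
      fun p => cexp (-(ε - I * ξ) * ‖p.1‖ ^ 2 + I * inner ℝ w p.1) *
        (ppow false p.2 (α - 1) * cexp ((ε + I * ξ) * p.2)) := by
  ext ⟨v, s⟩
  simp only [Function.comp_apply, shearEquiv, MeasurableEquiv.coe_mk, Equiv.coe_fn_mk,
    dampedMinusKernel, add_sub_cancel_right]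
  rw [mul_left_comm, mul_assoc, ← exp_add, ← exp_add]
  push_cast
  ring_nf

variable [FiniteDimensional ℝ V] {α : ℂ} {ε : ℝ}

lemma integrable_dampedMinusKernel (hα : 0 < α.re) (hε : 0 < ε) (w : V) (ξ : ℝ) :
    Integrable (dampedMinusKernel α ε w ξ) := by
  have hT := measurePreserving_shearEquiv (volume : Measure V)
    (f := fun v : V => ‖v‖ ^ 2) (by fun_prop)
  rw [Measure.volume_eq_prod, ← hT.integrable_comp_emb (MeasurableEquiv.measurableEmbedding _),
    dampedMinusKernel_comp_shearEquiv]
  exact (GaussianFourier.integrable_cexp_neg_mul_sq_norm_add (by simpa using hε) I w).mul_prod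
    (integrable_ppow_false_mul_cexp hα (by simpa using hε))

lemma integral_dampedMinusKernel (hα : 0 < α.re) (hε : 0 < ε) (w : V) (ξ : ℝ) :
    ∫ y, dampedMinusKernel α ε w ξ y =
      Gamma α * (ε + I * ξ) ^ (-α) * ((Real.pi : ℂ) / (ε - I * ξ)) ^ (Module.finrank ℝ V / 2 : ℂ) *
        cexp (-((‖w‖ ^ 2 : ℝ) : ℂ) / (4 * (ε - I * ξ))) := by
  have hT := measurePreserving_shearEquiv (volume : Measure V)
    (f := fun v : V => ‖v‖ ^ 2) (by fun_prop)
  rw [Measure.volume_eq_prod, ← hT.integral_comp' (dampedMinusKernel α ε w ξ),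
    ← Function.comp_def, dampedMinusKernel_comp_shearEquiv,
    integral_prod_mul (fun v : V => cexp (-(ε - I * ξ) * ‖v‖ ^ 2 + I * inner ℝ w v))
      (fun s : ℝ => ppow false s (α - 1) * cexp ((ε + I * ξ) * s)),
    GaussianFourier.integral_cexp_neg_mul_sq_norm_add (by simpa using hε),
    integral_ppow_false_mul_cexp hα (by simpa using hε), I_sq]
  push_cast
  rw [neg_one_mul]
  ring

end DampedKernel

/-- Fourier computation for the "−" kernel with Gaussian damping:
(1/Γ(α)) ∫ (yₙ−|y'|²)₋^{α−1} e^{ε yₙ − 2ε|y'|²} e^{i x·y} dy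
  = π^{(n−1)/2} (ε + i xₙ)^{−α} (ε − i xₙ)^{(1−n)/2} exp(−|x'|²/(4(ε − i xₙ))),
with the principal power branches (arg ∈ (−π/2, π/2) since the bases have Re = ε > 0). -/
theorem fourier_minus_kernel_damped (n : ℕ) (hn : 2 ≤ n)
    (α : ℂ) (hα : 0 < α.re) (ε : ℝ) (hε : 0 < ε) (x : Rn n) :
    Integrable (fun y : Rn n => ppow false (y.2 - ‖y.1‖ ^ 2) (α - 1) *
      Complex.exp ((ε : ℂ) * y.2 - 2 * (ε : ℂ) * ((‖y.1‖ ^ 2 : ℝ) : ℂ)) *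
      Complex.exp (Complex.I * (((inner ℝ x.1 y.1 : ℝ) : ℂ) + (x.2 : ℂ) * y.2))) ∧
    (1 / Complex.Gamma α) *
        ∫ y : Rn n, ppow false (y.2 - ‖y.1‖ ^ 2) (α - 1) *
          Complex.exp ((ε : ℂ) * y.2 - 2 * (ε : ℂ) * ((‖y.1‖ ^ 2 : ℝ) : ℂ)) *
          Complex.exp (Complex.I * (((inner ℝ x.1 y.1 : ℝ) : ℂ) + (x.2 : ℂ) * y.2))
      = (Real.pi : ℂ) ^ (((n : ℂ) - 1) / 2) *
          ((ε : ℂ) + Complex.I * x.2) ^ (-α) *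
          ((ε : ℂ) - Complex.I * x.2) ^ ((1 - (n : ℂ)) / 2) *
          Complex.exp (-((‖x.1‖ ^ 2 : ℝ) : ℂ) / (4 * ((ε : ℂ) - Complex.I * x.2))) := by
  refine ⟨integrable_dampedMinusKernel hα hε x.1 x.2, ?_⟩
  have hdim : (Module.finrank ℝ (EuclideanSpace ℝ (Fin (n - 1))) : ℂ) = n - 1 := by
    rw [finrank_euclideanSpace_fin, Nat.cast_sub (by omega), Nat.cast_one]
  have hslit : (ε : ℂ) - I * x.2 ∈ slitPlane := Or.inl (by simpa using hε)
  have h := integral_dampedMinusKernel hα hε x.1 x.2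
  simp only [dampedMinusKernel] at h
  rw [h, hdim, ofReal_div_cpow Real.pi_pos hslit, show -(((n : ℂ) - 1) / 2) = (1 - n) / 2 by ring]
  field_simp [Gamma_ne_zero_of_re_pos hα]
end
end
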